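/- arXiv:2009.03887 — 2 statements merged into one kernel-verified Lean document; each statement's English description precedes it below -/
import Mathlib

section
/- Let Σ = diag(σ_1, ..., σ_q) with σ_1 ≥ ... ≥ σ_q ≥ 0, let m, k = q - m, s_1 = Σ_{i=m}^q σ_i > 0, x_0 as above, and X ∈ ℝ^{(k+1)×k} with orthonormal columns spanning the orthogonal complement of x_0. For uniform random signs s ∈ {-1,1}^{k+1}, let Z = sqrt(s_1/k)·diag(s)·X and let Σ̃_L = Σ̃_R be the q × r block-diagonal matrix diag(sqrt(σ_1), ..., sqrt(σ_{m-1}), Z) with r = q - 1. Then E_s[Σ̃_L Σ̃_R^T] = Σ, i.e., the rank-r estimator is unbiased. -/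
open Matrix

lemma sum_sign_ne {n : ℕ} {i j : Fin n} (h : i ≠ j) :
    ∑ s : Fin n → Bool, ((if s i then (1:ℝ) else -1) * (if s j then 1 else -1)) = 0 := by
  set f : (Fin n → Bool) → ℝ :=
    fun s => (if s i then (1:ℝ) else -1) * (if s j then 1 else -1) with hf
  have hinv : Function.Involutive (fun s : Fin n → Bool => Function.update s i (!s i)) := by
    intro s; ext l
    by_cases hl : l = i
    · subst hl; simp
    · simp [Function.update_of_ne hl]
  have hg : ∀ s : Fin n → Bool, f (Function.update s i (!s i)) = - f s := by
    intro s
    simp only [hf, Function.update_self, Function.update_of_ne (Ne.symm h)]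
    cases s i <;> cases s j <;> norm_num
  have h1 : ∑ s : Fin n → Bool, f (Function.update s i (!s i)) = ∑ s, f s :=
    Fintype.sum_bijective _ hinv.bijective _ _ (fun s => rfl)
  simp only [hg, Finset.sum_neg_distrib] at h1
  linarith

/-- The rank-r estimator Σ̃_L Σ̃_Rᵀ built from the top singular values and the
randomized mixing matrix Z = sqrt(s1/k)·diag(s)·X is unbiased: its expectation over uniform
random signs equals Σ = diag(σ_1, ..., σ_q). -/
theorem stmt5 (m' k : ℕ) (hk : 1 ≤ k)
    (σtop : Fin m' → ℝ) (σbot : Fin (k + 1) → ℝ) (s1 : ℝ)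
    (hσtop : ∀ i, 0 ≤ σtop i) (hσbot : ∀ i, 0 ≤ σbot i)
    (hs1 : s1 = ∑ i, σbot i) (hs1pos : 0 < s1)
    (hbound : ∀ i, σbot i * k ≤ s1)
    (x0 : Fin (k + 1) → ℝ)
    (hx0 : ∀ i, x0 i = Real.sqrt (1 - σbot i * k / s1))
    (X : Matrix (Fin (k + 1)) (Fin k) ℝ)
    (hX : Xᵀ * X = 1)
    (horth : ∀ j, ∑ i, x0 i * X i j = 0)
    (SL : (Fin (k + 1) → Bool) → Matrix (Fin m' ⊕ Fin (k + 1)) (Fin m' ⊕ Fin k) ℝ)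
    (hSL : ∀ s, SL s = Matrix.fromBlocks
      (Matrix.diagonal fun i => Real.sqrt (σtop i)) 0 0
      (Real.sqrt (s1 / k) • (Matrix.diagonal (fun i => if s i then (1 : ℝ) else -1) * X))) :
    ((2 : ℝ) ^ (k + 1))⁻¹ • ∑ s : Fin (k + 1) → Bool, SL s * (SL s)ᵀ =
      Matrix.fromBlocks (Matrix.diagonal σtop) 0 0 (Matrix.diagonal σbot) := by
  have hkR : (0:ℝ) < (k:ℝ) := by exact_mod_cast hk
  have hsq : ∀ i, x0 i * x0 i = 1 - σbot i * k / s1 := by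
    intro i
    rw [hx0]
    exact Real.mul_self_sqrt (by
      rw [sub_nonneg, div_le_one hs1pos]
      exact hbound i)
  -- norm of x0
  have hx0norm : ∑ i, x0 i * x0 i = 1 := by
    simp only [hsq]
    rw [Finset.sum_sub_distrib]
    have : ∑ i : Fin (k+1), σbot i * ↑k / s1 = (k:ℝ) := by
      rw [← Finset.sum_div, ← Finset.sum_mul, ← hs1, mul_comm, mul_div_assoc,
        div_self hs1pos.ne', mul_one]
    rw [this]
    simp
  -- the augmented matrix [x0 | X]
  set A : Matrix (Fin (k+1)) (Fin (k+1)) ℝ :=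
    Matrix.of (fun i j => Fin.cases (x0 i) (fun l => X i l) j) with hA
  have hATA : Aᵀ * A = 1 := by
    ext j j'
    simp only [Matrix.mul_apply, Matrix.transpose_apply, hA, Matrix.of_apply]
    induction j using Fin.cases with
    | zero =>
      induction j' using Fin.cases with
      | zero => simpa using hx0norm
      | succ l' => simpa [Matrix.one_apply, (Fin.succ_ne_zero l').symm] using horth l'
    | succ l =>
      induction j' using Fin.cases with
      | zero =>
        simp only [Fin.cases_zero, Fin.cases_succ, Matrix.one_apply, Fin.succ_ne_zero l,
          if_neg (Fin.succ_ne_zero l)]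
        simpa [mul_comm] using horth l
      | succ l' =>
        have := congrFun (congrFun hX l) l'
        simp only [Matrix.mul_apply, Matrix.transpose_apply] at this
        simp only [Fin.cases_succ, this, Matrix.one_apply, Fin.succ_inj]
  have hAAT : A * Aᵀ = 1 := mul_eq_one_comm.mp hATA
  -- the diagonal of X * Xᵀ
  have hXX : ∀ i, (∑ l, X i l * X i l) = σbot i * k / s1 := by
    intro i
    have h := congrFun (congrFun hAAT i) i
    simp only [Matrix.mul_apply, Matrix.transpose_apply, Matrix.one_apply_eq] at h
    rw [Fin.sum_univ_succ] at h
    simp only [hA, Matrix.of_apply, Fin.cases_zero, Fin.cases_succ] at h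
    have := hsq i
    linarith
  -- blockwise form of SL s * (SL s)ᵀ
  have hM : ∀ s, SL s * (SL s)ᵀ =
      Matrix.fromBlocks (Matrix.diagonal σtop) 0 0
        (Matrix.of fun i j => (s1/(k:ℝ)) *
          ((if s i then (1:ℝ) else -1) * (if s j then 1 else -1)) * ∑ l, X i l * X j l) := by
    intro s
    rw [hSL, Matrix.fromBlocks_transpose, Matrix.fromBlocks_multiply]
    have hc : Real.sqrt (s1 / k) * Real.sqrt (s1 / k) = s1 / k :=
      Real.mul_self_sqrt (le_of_lt (div_pos hs1pos hkR))
    ext a b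
    cases a with
    | inl i =>
      cases b with
      | inl j =>
        simp only [Matrix.fromBlocks_apply₁₁, Matrix.add_apply, Matrix.transpose_zero,
          Matrix.mul_zero, Matrix.zero_apply, add_zero, Matrix.diagonal_transpose,
          Matrix.diagonal_mul_diagonal]
        by_cases hij : i = j
        · subst hij; simp [Real.mul_self_sqrt (hσtop i)]
        · simp [Matrix.diagonal_apply_ne _ hij]
      | inr j => simp
    | inr i =>
      cases b with
      | inl j => simp
      | inr j =>
        simp only [Matrix.fromBlocks_apply₂₂, Matrix.add_apply, Matrix.zero_mul,
          Matrix.zero_apply, zero_add, Matrix.transpose_smul, Matrix.smul_mul, Matrix.mul_smul,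
          Matrix.smul_apply, smul_eq_mul, Matrix.of_apply, smul_smul, hc]
        rw [Matrix.mul_apply]
        simp only [Matrix.transpose_apply, Matrix.diagonal_mul]
        rw [Finset.mul_sum, Finset.mul_sum]
        exact Finset.sum_congr rfl fun l _ => by ring
  -- now finish entrywise
  ext a b
  have hcard : (Fintype.card (Fin (k+1) → Bool) : ℝ) = 2 ^ (k+1) := by
    simp [Fintype.card_fun]
  simp only [hM, Matrix.smul_apply, Matrix.sum_apply, smul_eq_mul]
  cases a with
  | inl i =>
    cases b with
    | inl j =>
      simp only [Matrix.fromBlocks_apply₁₁, Finset.sum_const, Finset.card_univ, nsmul_eq_mul]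
      rw [hcard, inv_mul_cancel_left₀ (by positivity)]
    | inr j => simp
  | inr i =>
    cases b with
    | inl j => simp
    | inr j =>
      simp only [Matrix.fromBlocks_apply₂₂, Matrix.of_apply]
      have hrw : ∀ s : Fin (k+1) → Bool,
          (s1/(k:ℝ)) * ((if s i then (1:ℝ) else -1) * (if s j then 1 else -1)) * (∑ l, X i l * X j l)
          = ((s1/(k:ℝ)) * ∑ l, X i l * X j l) *
              ((if s i then (1:ℝ) else -1) * (if s j then 1 else -1)) := by
        intro s; ring
      simp only [hrw]
      rw [← Finset.mul_sum]
      by_cases hij : i = j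
      · subst hij
        have : ∀ s : Fin (k+1) → Bool,
            ((if s i then (1:ℝ) else -1) * (if s i then 1 else -1)) = 1 := by
          intro s; cases s i <;> norm_num
        simp only [this, Finset.sum_const, Finset.card_univ, nsmul_eq_mul, mul_one]
        rw [hcard, hXX i, Matrix.diagonal_apply_eq]
        field_simp
      · rw [sum_sign_ne hij]
        simp [Matrix.diagonal_apply_ne _ hij]
end

section
/- Let f^t: ℝ^N → ℝ for t = 1..T be twice continuously differentiable with c·I ⪯ ∇²f^t everywhere (c > 0), let F be a closed convex set with diameter D, let w* minimize Σ_t f^t over F, and suppose updates w^{t+1} = P_F(w^t - η_t(g^t + ε^t)) with η_t = 1/√t, g^t = ∇f^t(w^t), ||g^t|| ≤ G, ||ε^t|| ≤ E, and ||ε^t|| ≤ (c/2)||w^t - w*|| for all t. Then the regret R(T) = Σ_{t=1}^T f^t(w^t) - Σ_{t=1}^T f^t(w*) satisfies R(T) ≤ (D²/2)√T + (G + E)²(√T - 1/2). -/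
/-!
Restricted to a line, the Hessian bound makes each `f t` `c`-strongly convex, so
`f t (w t) - f t w* ≤ ⟪g t, w t - w*⟫ - (c/2) ‖w t - w*‖²`, and `‖ε t‖ ≤ (c/2) ‖w t - w*‖` lets
this quadratic term absorb the noise. Projection onto the convex set `F` does not increase the
distance to `w* ∈ F`, so with `η t = 1/√t` the descent identity bounds the regret at step `t` by
`(√t/2) (‖w t - w*‖² - ‖w (t+1) - w*‖²) + (G + E)² / (2√t)`. Abel summation with
`‖w t - w*‖ ≤ D` bounds the first part by `(D²/2) √T`, and `∑ 1/√t ≤ 2√T - 1` the second.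
-/

open scoped RealInnerProductSpace

open Finset

theorem add_deriv_add_half_le_of_deriv2_ge {φ φ' φ'' : ℝ → ℝ} {m : ℝ}
    (hφ : ∀ s, HasDerivAt φ (φ' s) s) (hφ' : ∀ s, HasDerivAt φ' (φ'' s) s)
    (hm : ∀ s, m ≤ φ'' s) :
    φ 0 + φ' 0 + m / 2 ≤ φ 1 := by
  have hmono : Monotone fun s => φ' s - m * s :=
    monotone_of_hasDerivAt_nonneg (fun s => (hφ' s).sub ((hasDerivAt_id s).const_mul m))
      fun s => by simpa using hm s
  have hψ : ∀ s, HasDerivAt (fun s => φ s - m / 2 * s ^ 2) (φ' s - m * s) s := fun s =>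
    ((hφ s).sub ((hasDerivAt_pow 2 s).const_mul (m / 2))).congr_deriv (by ring)
  obtain ⟨ξ, hξ, hslope⟩ := exists_hasDerivAt_eq_slope _ _ zero_lt_one
    (fun s _ => (hψ s).continuousAt.continuousWithinAt) (fun s _ => hψ s)
  have := hmono hξ.1.le
  simp only at this hslope
  linarith

section InnerProductSpace

variable {V : Type*} [NormedAddCommGroup V] [InnerProductSpace ℝ V]

theorem ContDiff.add_inner_gradient_add_le [CompleteSpace V] {f : V → ℝ} {c : ℝ}
    (hf : ContDiff ℝ 2 f) (hH : ∀ w u, c * ‖u‖ ^ 2 ≤ iteratedFDeriv ℝ 2 f w ![u, u])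
    (x y : V) :
    f x + ⟪gradient f x, y - x⟫ + c / 2 * ‖y - x‖ ^ 2 ≤ f y := by
  set v := y - x
  have hline : ∀ s : ℝ, HasDerivAt (fun s : ℝ => x + s • v) v s := fun s => by
    simpa using ((hasDerivAt_id s).smul_const v).const_add x
  have hf' : Differentiable ℝ (fderiv ℝ f) :=
    (hf.fderiv_right (m := 1) le_rfl).differentiable one_ne_zero
  have hfirst : ∀ s : ℝ, HasDerivAt (fun s => f (x + s • v)) (fderiv ℝ f (x + s • v) v) s :=
    fun s => ((hf.differentiable two_ne_zero) _).hasFDerivAt.comp_hasDerivAt s (hline s)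
  have hsecond : ∀ s : ℝ, HasDerivAt (fun s => fderiv ℝ f (x + s • v) v)
      (iteratedFDeriv ℝ 2 f (x + s • v) ![v, v]) s := fun s => by
    rw [iteratedFDeriv_two_apply]
    exact ((ContinuousLinearMap.apply ℝ ℝ v).hasFDerivAt.comp _
      (hf' _).hasFDerivAt).comp_hasDerivAt s (hline s)
  have key := add_deriv_add_half_le_of_deriv2_ge hfirst hsecond fun s => hH _ v
  have hgrad : ⟪gradient f x, v⟫ = fderiv ℝ f x v := InnerProductSpace.toDual_symm_apply
  simp only [zero_smul, add_zero, one_smul, v, add_sub_cancel] at key hgrad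
  rw [hgrad]
  linarith

theorem Convex.norm_sub_le_of_forall_norm_sub_le {K : Set V} (hK : Convex ℝ K) {x p y : V}
    (hp : p ∈ K) (hmin : ∀ z ∈ K, ‖x - p‖ ≤ ‖x - z‖) (hy : y ∈ K) :
    ‖p - y‖ ≤ ‖x - y‖ := by
  have : Nonempty K := ⟨⟨p, hp⟩⟩
  have hinner : ⟪x - p, y - p⟫ ≤ 0 :=
    (norm_eq_iInf_iff_real_inner_le_zero hK hp).1
      (le_antisymm (le_ciInf fun z => hmin z z.2)
        (ciInf_le ⟨0, Set.forall_mem_range.2 fun _ => norm_nonneg _⟩ (⟨p, hp⟩ : K))) y hy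
  have hexpand : ‖x - y‖ ^ 2 = ‖x - p‖ ^ 2 - 2 * ⟪x - p, y - p⟫ + ‖p - y‖ ^ 2 := by
    rw [← norm_sub_rev y p, ← norm_sub_sq_real, sub_sub_sub_cancel_right]
  refine pow_le_pow_iff_left₀ (norm_nonneg _) (norm_nonneg _) two_ne_zero |>.1 ?_
  nlinarith [sq_nonneg ‖x - p‖]

theorem norm_sub_sq_le_of_norm_sub_le_norm_step {w u y p : V} {η : ℝ}
    (h : ‖p - y‖ ≤ ‖w - η • u - y‖) :
    ‖p - y‖ ^ 2 ≤ ‖w - y‖ ^ 2 - 2 * η * ⟪u, w - y⟫ + η ^ 2 * ‖u‖ ^ 2 := by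
  have hstep : w - η • u - y = (w - y) - η • u := by abel
  calc ‖p - y‖ ^ 2 ≤ ‖w - η • u - y‖ ^ 2 := by gcongr
    _ = _ := by
      rw [hstep, norm_sub_sq_real, real_inner_smul_right, norm_smul, real_inner_comm,
        Real.norm_eq_abs, mul_pow, sq_abs]
      ring

theorem sub_le_of_noisy_gradient_step {f : V → ℝ} {c η L : ℝ} {w w' y g ε : V} (hη : 0 < η)
    (hsc : f w + ⟪g, y - w⟫ + c / 2 * ‖y - w‖ ^ 2 ≤ f y) (hε : ‖ε‖ ≤ c / 2 * ‖w - y‖)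
    (hL : ‖g + ε‖ ≤ L) (hstep : ‖w' - y‖ ≤ ‖w - η • (g + ε) - y‖) :
    f w - f y ≤ (‖w - y‖ ^ 2 - ‖w' - y‖ ^ 2) / (2 * η) + η / 2 * L ^ 2 := by
  have hbiased : f w - f y ≤ ⟪g + ε, w - y⟫ := by
    have hε' : -⟪ε, w - y⟫ ≤ c / 2 * ‖w - y‖ * ‖w - y‖ :=
      ((neg_le_abs _).trans (abs_real_inner_le_norm _ _)).trans
        (mul_le_mul_of_nonneg_right hε (norm_nonneg _))
    rw [inner_add_left]
    rw [← neg_sub w y, inner_neg_right, norm_neg] at hsc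
    nlinarith
  have hdescent := norm_sub_sq_le_of_norm_sub_le_norm_step hstep
  have hL2 : ‖g + ε‖ ^ 2 ≤ L ^ 2 := pow_le_pow_left₀ (norm_nonneg _) hL 2
  rw [div_add' _ _ _ (by positivity), le_div_iff₀ (by positivity)]
  nlinarith

end InnerProductSpace

theorem sum_Icc_inv_sqrt_le {T : ℕ} (hT : 1 ≤ T) :
    ∑ t ∈ Icc 1 T, 1 / Real.sqrt t ≤ 2 * Real.sqrt T - 1 := by
  induction T, hT using Nat.le_induction with
  | base => norm_num
  | succ T hT ih =>
    rw [sum_Icc_succ_top (by omega)]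
    have hpos : (0 : ℝ) < Real.sqrt (T + 1) := by positivity
    have hsq : Real.sqrt T ^ 2 = T := Real.sq_sqrt (by positivity)
    have hsq1 : Real.sqrt (T + 1) ^ 2 = T + 1 := Real.sq_sqrt (by positivity)
    have hstep : 1 / Real.sqrt (T + 1) ≤ 2 * (Real.sqrt (T + 1) - Real.sqrt T) := by
      rw [div_le_iff₀ hpos]
      nlinarith [sq_nonneg (Real.sqrt (T + 1) - Real.sqrt T)]
    push_cast
    linarith

theorem sum_mul_sub_succ_le {a b : ℕ → ℝ} {M : ℝ} (hb : Monotone b) (hb0 : 0 ≤ b 0) {T : ℕ}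
    (ha : ∀ t ∈ Icc 1 (T + 1), a t ≤ M) :
    ∑ t ∈ Icc 1 T, b t * (a t - a (t + 1)) ≤ b T * (M - a (T + 1)) := by
  induction T with
  | zero => simpa using mul_nonneg hb0 (sub_nonneg.2 (ha 1 (by simp)))
  | succ T ih =>
    rw [sum_Icc_succ_top (by omega)]
    have ih := ih fun t ht => ha t (by simp only [mem_Icc] at ht ⊢; omega)
    have hM : 0 ≤ M - a (T + 1) := sub_nonneg.2 (ha (T + 1) (by simp))
    have := mul_le_mul_of_nonneg_right (hb (Nat.le_succ T)) hM
    linarith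

theorem stmt11_general (N T : ℕ) (hT : 1 ≤ T) (c : ℝ)
    (f : ℕ → EuclideanSpace ℝ (Fin N) → ℝ)
    (hf : ∀ t, ContDiff ℝ 2 (f t))
    (hHess : ∀ t, ∀ w u : EuclideanSpace ℝ (Fin N),
      c * ‖u‖ ^ 2 ≤ iteratedFDeriv ℝ 2 (f t) w ![u, u])
    (F : Set (EuclideanSpace ℝ (Fin N))) (hFconv : Convex ℝ F)
    (D G E : ℝ)
    (hD : ∀ w ∈ F, ∀ v ∈ F, ‖w - v‖ ≤ D)
    (P : EuclideanSpace ℝ (Fin N) → EuclideanSpace ℝ (Fin N))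
    (hPmem : ∀ x, P x ∈ F)
    (hPproj : ∀ x, ∀ y ∈ F, ‖x - P x‖ ≤ ‖x - y‖)
    (w ε : ℕ → EuclideanSpace ℝ (Fin N))
    (hw1 : w 1 ∈ F)
    (hupd : ∀ t, 1 ≤ t → t ≤ T →
      w (t + 1) = P (w t - (1 / Real.sqrt t) • (gradient (f t) (w t) + ε t)))
    (hg : ∀ t, 1 ≤ t → t ≤ T → ‖gradient (f t) (w t)‖ ≤ G)
    (hε : ∀ t, 1 ≤ t → t ≤ T → ‖ε t‖ ≤ E)
    (wstar : EuclideanSpace ℝ (Fin N)) (hws : wstar ∈ F)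
    (hεsmall : ∀ t, 1 ≤ t → t ≤ T → ‖ε t‖ ≤ c / 2 * ‖w t - wstar‖) :
    (∑ t ∈ Finset.Icc 1 T, f t (w t)) - (∑ t ∈ Finset.Icc 1 T, f t wstar) ≤
      D ^ 2 / 2 * Real.sqrt T + (G + E) ^ 2 * (Real.sqrt T - 1 / 2) := by
  set a : ℕ → ℝ := fun t => ‖w t - wstar‖ ^ 2
  have hwF : ∀ t ∈ Icc 1 (T + 1), w t ∈ F := by
    rintro (_ | _ | t) ht <;> simp only [mem_Icc] at ht
    · omega
    · exact hw1
    · rw [hupd (t + 1) (by omega) (by omega)]; exact hPmem _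
  have hstep : ∀ t ∈ Icc 1 T, f t (w t) - f t wstar ≤
      Real.sqrt t / 2 * (a t - a (t + 1)) + (G + E) ^ 2 / 2 * (1 / Real.sqrt t) := by
    intro t ht
    obtain ⟨ht1, htT⟩ := mem_Icc.1 ht
    have hη : 0 < 1 / Real.sqrt t := by positivity
    have h := sub_le_of_noisy_gradient_step hη ((hf t).add_inner_gradient_add_le (hHess t) _ _)
      (hεsmall t ht1 htT) ((norm_add_le _ _).trans (add_le_add (hg t ht1 htT) (hε t ht1 htT)))
      (hupd t ht1 htT ▸ hFconv.norm_sub_le_of_forall_norm_sub_le (hPmem _) (hPproj _) hws)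
    exact h.trans_eq (by simp only [a]; field_simp)
  have htel := sum_mul_sub_succ_le (M := D ^ 2) (b := fun t : ℕ => Real.sqrt t / 2)
    (fun _ _ h => by dsimp only; gcongr) (by simp)
    fun t ht => pow_le_pow_left₀ (norm_nonneg _) (hD _ (hwF t ht) _ hws) 2
  have hsqrt := sum_Icc_inv_sqrt_le hT
  calc (∑ t ∈ Icc 1 T, f t (w t)) - ∑ t ∈ Icc 1 T, f t wstar
      = ∑ t ∈ Icc 1 T, (f t (w t) - f t wstar) := (sum_sub_distrib _ _).symm
    _ ≤ ∑ t ∈ Icc 1 T, Real.sqrt t / 2 * (a t - a (t + 1))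
          + (G + E) ^ 2 / 2 * ∑ t ∈ Icc 1 T, 1 / Real.sqrt t := by
      rw [mul_sum, ← sum_add_distrib]; exact sum_le_sum hstep
    _ ≤ Real.sqrt T / 2 * (D ^ 2 - a (T + 1)) + (G + E) ^ 2 / 2 * (2 * Real.sqrt T - 1) :=
      add_le_add htel (mul_le_mul_of_nonneg_left hsqrt (by positivity))
    _ ≤ D ^ 2 / 2 * Real.sqrt T + (G + E) ^ 2 * (Real.sqrt T - 1 / 2) := by
      nlinarith [Real.sqrt_nonneg T, sq_nonneg ‖w (T + 1) - wstar‖]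

/-- Online projected SGD with noisy gradients g^t + ε^t, learning rate 1/√t,
strongly convex losses (Hessian ⪰ cI), ‖g^t‖ ≤ G, ‖ε^t‖ ≤ E and
‖ε^t‖ ≤ (c/2)‖w^t - w*‖ has regret R(T) ≤ (D²/2)√T + (G + E)²(√T - 1/2). -/
theorem stmt11 (N T : ℕ) (hT : 1 ≤ T) (c : ℝ) (hc : 0 < c)
    (f : ℕ → EuclideanSpace ℝ (Fin N) → ℝ)
    (hf : ∀ t, ContDiff ℝ 2 (f t))
    (hHess : ∀ t, ∀ w u : EuclideanSpace ℝ (Fin N),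
      c * ‖u‖ ^ 2 ≤ iteratedFDeriv ℝ 2 (f t) w ![u, u])
    (F : Set (EuclideanSpace ℝ (Fin N))) (hFne : F.Nonempty)
    (hFc : IsClosed F) (hFconv : Convex ℝ F)
    (D G E : ℝ)
    (hD : ∀ w ∈ F, ∀ v ∈ F, ‖w - v‖ ≤ D)
    (P : EuclideanSpace ℝ (Fin N) → EuclideanSpace ℝ (Fin N))
    (hPmem : ∀ x, P x ∈ F)
    (hPproj : ∀ x, ∀ y ∈ F, ‖x - P x‖ ≤ ‖x - y‖)
    (w ε : ℕ → EuclideanSpace ℝ (Fin N))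
    (hw1 : w 1 ∈ F)
    (hupd : ∀ t, 1 ≤ t → t ≤ T →
      w (t + 1) = P (w t - (1 / Real.sqrt t) • (gradient (f t) (w t) + ε t)))
    (hg : ∀ t, 1 ≤ t → t ≤ T → ‖gradient (f t) (w t)‖ ≤ G)
    (hε : ∀ t, 1 ≤ t → t ≤ T → ‖ε t‖ ≤ E)
    (wstar : EuclideanSpace ℝ (Fin N)) (hws : wstar ∈ F)
    (hopt : ∀ v ∈ F, ∑ t ∈ Finset.Icc 1 T, f t wstar ≤ ∑ t ∈ Finset.Icc 1 T, f t v)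
    (hεsmall : ∀ t, 1 ≤ t → t ≤ T → ‖ε t‖ ≤ c / 2 * ‖w t - wstar‖) :
    (∑ t ∈ Finset.Icc 1 T, f t (w t)) - (∑ t ∈ Finset.Icc 1 T, f t wstar) ≤
      D ^ 2 / 2 * Real.sqrt T + (G + E) ^ 2 * (Real.sqrt T - 1 / 2) :=
  stmt11_general N T hT c f hf hHess F hFconv D G E hD P hPmem hPproj w ε hw1 hupd hg hε wstar hws
    hεsmall
end
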